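/- Every expansive homeomorphism of a compact metric space with the shadowing property has the negative limit shadowing property: every sequence (x_n)_{n≤0} with d(f(x_n), x_{n+1}) → 0 as n → −∞ is limit shadowed by some point y, i.e., d(f^n(y), x_n) → 0 as n → −∞. -/

import Mathlib

open Filter Topology

/-- The `n`-th iterate (for `n : ℤ`) of a homeomorphism. -/
def iterZ {X : Type*} [MetricSpace X] (f : X ≃ₜ X) (n : ℤ) (x : X) : X :=
  (f.toEquiv ^ n) x

/-- `f` has the two-sided limit shadowing property: every sequence `(x_i)_{i∈ℤ}` with
`d(f(x_i), x_{i+1}) → 0` as `|i| → ∞` admits `y` with `d(f^i(y), x_i) → 0` as `|i| → ∞`. -/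
def TwoSidedLimitShadowing {X : Type*} [MetricSpace X] (f : X ≃ₜ X) : Prop :=
  ∀ x : ℤ → X,
    Tendsto (fun i => dist (f (x i)) (x (i + 1))) cofinite (𝓝 0) →
    ∃ y : X, Tendsto (fun i => dist (iterZ f i y) (x i)) cofinite (𝓝 0)

/-- The (pseudo-orbit) shadowing property. -/
def ShadowingProp {X : Type*} [MetricSpace X] (f : X ≃ₜ X) : Prop :=
  ∀ ε > 0, ∃ δ > 0, ∀ x : ℤ → X,
    (∀ i, dist (f (x i)) (x (i + 1)) < δ) →
    ∃ y, ∀ i, dist (iterZ f i y) (x i) < ε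

/-- Expansiveness of a homeomorphism. -/
def ExpansiveH {X : Type*} [MetricSpace X] (f : X ≃ₜ X) : Prop :=
  ∃ ε > 0, ∀ x y : X, (∀ i : ℤ, dist (iterZ f i x) (iterZ f i y) < ε) → x = y

/-- The specification property: for every `ε > 0` there is `L` such that every `L`-spaced
specification (finite family of orbit pieces on integer intervals `[a i, b i]` whose
consecutive intervals are at least `L` apart) is `ε`-shadowed. -/
def SpecificationProp {X : Type*} [MetricSpace X] (f : X ≃ₜ X) : Prop :=
  ∀ ε > 0, ∃ L : ℕ, ∀ (m : ℕ) (a b : Fin m → ℤ) (P : ℤ → X),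
    (∀ i, a i ≤ b i) →
    (∀ (i : ℕ) (h : i + 1 < m), b ⟨i, Nat.lt_of_succ_lt h⟩ + L ≤ a ⟨i + 1, h⟩) →
    (∀ (i : Fin m), ∀ t₁ ∈ Set.Icc (a i) (b i), ∀ t₂ ∈ Set.Icc (a i) (b i),
      iterZ f (t₂ - t₁) (P t₁) = P t₂) →
    ∃ y, ∀ (i : Fin m), ∀ n ∈ Set.Icc (a i) (b i), dist (iterZ f n y) (P n) < ε

/-- The (positive) limit shadowing property. -/
def LimitShadowing {X : Type*} [MetricSpace X] (f : X ≃ₜ X) : Prop :=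
  ∀ x : ℕ → X, Tendsto (fun n => dist (f (x n)) (x (n + 1))) atTop (𝓝 0) →
    ∃ y, Tendsto (fun n : ℕ => dist (iterZ f n y) (x n)) atTop (𝓝 0)

/-- The negative limit shadowing property. -/
def NegLimitShadowing {X : Type*} [MetricSpace X] (f : X ≃ₜ X) : Prop :=
  ∀ x : ℤ → X, Tendsto (fun n => dist (f (x n)) (x (n + 1))) atBot (𝓝 0) →
    ∃ y, Tendsto (fun n : ℤ => dist (iterZ f n y) (x n)) atBot (𝓝 0)


lemma iterZ_add {X : Type*} [MetricSpace X] (f : X ≃ₜ X) (a b : ℤ) (x : X) :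
    iterZ f (a + b) x = iterZ f a (iterZ f b x) := by
  simp [iterZ, zpow_add, Equiv.Perm.mul_apply]

lemma iterZ_one {X : Type*} [MetricSpace X] (f : X ≃ₜ X) (x : X) :
    iterZ f 1 x = f x := by
  simp [iterZ]

lemma iterZ_neg_one {X : Type*} [MetricSpace X] (f : X ≃ₜ X) (x : X) :
    iterZ f (-1) x = f.symm x := by
  simp [iterZ, Equiv.Perm.inv_def]

lemma continuous_iterZ {X : Type*} [MetricSpace X] (f : X ≃ₜ X) (i : ℤ) :
    Continuous (iterZ f i) := by
  induction i using Int.induction_on with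
  | zero => exact (show iterZ f 0 = id from funext fun x => by simp [iterZ]) ▸ continuous_id
  | succ n ih =>
      have h : iterZ f (n + 1) = fun x => f (iterZ f n x) := by
        funext x
        rw [show ((n : ℤ) + 1) = 1 + n by ring, iterZ_add, iterZ_one]
      rw [h]; exact f.continuous.comp ih
  | pred n ih =>
      have h : iterZ f (-(n : ℤ) - 1) = fun x => f.symm (iterZ f (-n) x) := by
        funext x
        rw [show (-(n : ℤ) - 1) = -1 + -n by ring, iterZ_add, iterZ_neg_one]
      rw [h]; exact f.symm.continuous.comp ih

/-- Uniform expansivity on compact spaces. -/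
lemma unif_expansive {X : Type*} [MetricSpace X] [CompactSpace X] (f : X ≃ₜ X)
    (c : ℝ) (hc : 0 < c)
    (hce : ∀ x y : X, (∀ i : ℤ, dist (iterZ f i x) (iterZ f i y) < c) → x = y)
    (ρ : ℝ) (hρ : 0 < ρ) :
    ∃ M : ℕ, ∀ x y : X,
      (∀ i : ℤ, |i| ≤ (M : ℤ) → dist (iterZ f i x) (iterZ f i y) ≤ c / 2) →
      dist x y < ρ := by
  by_contra h
  push_neg at h
  choose u v hu hv using h
  obtain ⟨a, -, φ, hφ, hua⟩ := IsCompact.tendsto_subseq (x := u) isCompact_univ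
    (fun n => Set.mem_univ _)
  obtain ⟨b, -, ψ, hψ, hvb⟩ := IsCompact.tendsto_subseq (x := (v ∘ φ)) isCompact_univ
    (fun n => Set.mem_univ _)
  have hua' : Filter.Tendsto (u ∘ φ ∘ ψ) Filter.atTop (𝓝 a) :=
    hua.comp hψ.tendsto_atTop
  have hab : a = b := by
    apply hce
    intro i
    have hle : dist (iterZ f i a) (iterZ f i b) ≤ c / 2 := by
      have h1 : Filter.Tendsto (fun k => dist (iterZ f i (u (φ (ψ k))))
          (iterZ f i (v (φ (ψ k))))) Filter.atTop (𝓝 (dist (iterZ f i a) (iterZ f i b))) := by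
        exact Filter.Tendsto.dist
          (((continuous_iterZ f i).continuousAt).tendsto.comp hua')
          (((continuous_iterZ f i).continuousAt).tendsto.comp hvb)
      refine le_of_tendsto h1 ?_
      filter_upwards [Filter.eventually_ge_atTop i.natAbs] with k hk
      apply hu (φ (ψ k))
      have : i.natAbs ≤ φ (ψ k) := le_trans hk (le_trans (hψ.id_le k) (hφ.id_le (ψ k)))
      calc |i| = (i.natAbs : ℤ) := (Int.abs_eq_natAbs i)
        _ ≤ (φ (ψ k) : ℤ) := by exact_mod_cast this
    linarith
  have hρab : ρ ≤ dist a b := by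
    have h1 : Filter.Tendsto (fun k => dist (u (φ (ψ k))) (v (φ (ψ k))))
        Filter.atTop (𝓝 (dist a b)) := Filter.Tendsto.dist hua' hvb
    exact ge_of_tendsto h1 (Filter.Eventually.of_forall fun k => hv _)
  rw [hab] at hρab
  simp at hρab
  linarith

/-- Tail shadowing: every negative-limit pseudo-orbit is ε-shadowed on a tail. -/
lemma tail_shadow {X : Type*} [MetricSpace X] (f : X ≃ₜ X) (hsh : ShadowingProp f)
    (x : ℤ → X)
    (hx : Filter.Tendsto (fun n => dist (f (x n)) (x (n + 1))) Filter.atBot (𝓝 0))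
    (ε : ℝ) (hε : 0 < ε) :
    ∃ N : ℤ, ∃ y : X, ∀ n ≤ N, dist (iterZ f n y) (x n) < ε := by
  obtain ⟨δ, hδ, hshad⟩ := hsh ε hε
  have hev : ∀ᶠ n in Filter.atBot, dist (f (x n)) (x (n + 1)) < δ := by
    have := Metric.tendsto_nhds.1 hx δ hδ
    filter_upwards [this] with n hn
    simpa [Real.dist_eq, abs_of_nonneg dist_nonneg] using hn
  obtain ⟨N, hN⟩ := Filter.eventually_atBot.1 hev
  set z : ℤ → X := fun n => if n ≤ N then x n else iterZ f (n - N) (x N) with hz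
  have hpo : ∀ i, dist (f (z i)) (z (i + 1)) < δ := by
    intro i
    by_cases h1 : i + 1 ≤ N
    · have h0 : i ≤ N := by omega
      simp only [hz, if_pos h0, if_pos h1]
      exact hN i h0
    · by_cases h0 : i ≤ N
      · have hiN : i = N := by omega
        simp only [hz, if_pos h0, if_neg h1, hiN]
        have : (N + 1 - N : ℤ) = 1 := by ring
        rw [this, iterZ_one]
        simpa using hδ
      · simp only [hz, if_neg h0, if_neg h1]
        have : (i + 1 - N : ℤ) = 1 + (i - N) := by ring
        rw [this, iterZ_add, iterZ_one]
        simpa using hδ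
  obtain ⟨y, hy⟩ := hshad z hpo
  refine ⟨N, y, fun n hn => ?_⟩
  have := hy n
  simpa [hz, if_pos hn] using this

/-- Every expansive homeomorphism of a compact metric space with the shadowing property has
the negative limit shadowing property. -/
theorem stmt3 {X : Type*} [MetricSpace X] [CompactSpace X] (f : X ≃ₜ X)
    (hexp : ExpansiveH f) (hsh : ShadowingProp f) : NegLimitShadowing f := by
  obtain ⟨c, hc0, hce⟩ := hexp
  intro x hx
  obtain ⟨N, y, hy⟩ := tail_shadow f hsh x hx (c / 4) (by positivity)
  refine ⟨y, ?_⟩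
  rw [Metric.tendsto_nhds]
  intro ρ hρ
  obtain ⟨M, hM⟩ := unif_expansive f c hc0 hce (ρ / 2) (by positivity)
  obtain ⟨N', y', hy'⟩ := tail_shadow f hsh x hx (min (c / 4) (ρ / 2))
    (lt_min (by positivity) (by positivity))
  filter_upwards [Filter.eventually_le_atBot (min N N' - (M : ℤ))] with n hn
  have key : dist (iterZ f n y) (iterZ f n y') < ρ / 2 := by
    apply hM
    intro i hi
    have hle : n + i ≤ min N N' := by
      have : i ≤ (M : ℤ) := le_trans (le_abs_self i) hi
      omega
    rw [← iterZ_add f i n y, ← iterZ_add f i n y']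
    have h1 : dist (iterZ f (i + n) y) (x (i + n)) < c / 4 := by
      apply hy; have := le_min_iff.1 hle; omega
    have h2 : dist (iterZ f (i + n) y') (x (i + n)) < min (c / 4) (ρ / 2) := by
      apply hy'; have := le_min_iff.1 hle; omega
    have h2' : dist (iterZ f (i + n) y') (x (i + n)) < c / 4 :=
      lt_of_lt_of_le h2 (min_le_left _ _)
    have := dist_triangle (iterZ f (i + n) y) (x (i + n)) (iterZ f (i + n) y')
    rw [dist_comm (x (i + n)) (iterZ f (i + n) y')] at this
    linarith
  have h2 : dist (iterZ f n y') (x n) < ρ / 2 := by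
    have := hy' n (by have := le_min_iff.1 (le_trans hn (by omega : min N N' - (M:ℤ) ≤ min N N')); omega)
    exact lt_of_lt_of_le this (min_le_right _ _)
  have htri := dist_triangle (iterZ f n y) (iterZ f n y') (x n)
  simp only [Real.dist_eq, sub_zero, abs_of_nonneg dist_nonneg]
  linarith
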